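/- arXiv:0909.5033 — 5 statements merged into one kernel-verified Lean document; each statement's English description precedes it below -/
import Mathlib

section
/- Let M be a matroid and let N be a minor of M. Then for every cocircuit C_N of N there exists a cocircuit C_M of M such that the matroid N\C_N (N with C_N deleted) is a minor of the matroid M\C_M (M with C_M deleted). -/
/-! Common definitions for formalizing "On the Interplay between Graphic and
Cographic Matroids with Graphic Cocircuits" (arXiv:0909.5033). -/

section MatroidDefs

variable {α β : Type*}

/-- Deletion of a set of elements from a matroid: `M \ D`. -/
def mDel (M : Matroid α) (D : Set α) : Matroid α := M.restrict (M.E \ D)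

/-- Contraction of a set of elements in a matroid: `M / C = (M✶ \ C)✶`. -/
def mCon (M : Matroid α) (C : Set α) : Matroid α := (mDel M✶ C)✶

/-- `MinorOf N M` means `N` can be obtained from `M` by a sequence of deletions
and contractions. -/
inductive MinorOf : Matroid α → Matroid α → Prop
  | refl (M : Matroid α) : MinorOf M M
  | del {N M : Matroid α} (D : Set α) : MinorOf N M → MinorOf (mDel N D) M
  | con {N M : Matroid α} (C : Set α) : MinorOf N M → MinorOf (mCon N C) M

/-- `C` is a circuit of the matroid `M`: a minimal dependent set. -/
def IsCircuitOf (M : Matroid α) (C : Set α) : Prop :=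
  M.Dep C ∧ ∀ D, D ⊂ C → M.Indep D

/-- `C` is a cocircuit of `M`: a circuit of the dual matroid. -/
def IsCocircuitOf (M : Matroid α) (C : Set α) : Prop := IsCircuitOf M✶ C

/-- Matroid isomorphism: a bijection between the ground sets preserving independence. -/
def MatroidIso (M : Matroid α) (N : Matroid β) : Prop :=
  ∃ f : α → β, Set.BijOn f M.E N.E ∧ ∀ I ⊆ M.E, (M.Indep I ↔ N.Indep (f '' I))

/-- `M` has a minor isomorphic to `N`. -/
def HasMinorIso (M : Matroid α) (N : Matroid β) : Prop :=
  ∃ M₀ : Matroid α, MinorOf M₀ M ∧ MatroidIso M₀ N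

/-- A matroid is simple if it has no circuits of size one or two. -/
def IsSimpleMatroid (M : Matroid α) : Prop :=
  ∀ C, IsCircuitOf M C → C.ncard ≠ 1 ∧ C.ncard ≠ 2

/-- A `k`-separation of a matroid (rank condition phrased via bases of the two sides,
which all have the same cardinality): `r(X) + r(Y) - r(M) ≤ k - 1`. -/
def MatroidKSeparation (M : Matroid α) (k : ℕ) : Prop :=
  ∃ X Y : Set α, X ∪ Y = M.E ∧ Disjoint X Y ∧ k ≤ X.ncard ∧ k ≤ Y.ncard ∧
    ∀ I J B, M.IsBasis I X → M.IsBasis J Y → M.IsBase B →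
      I.ncard + J.ncard + 1 ≤ B.ncard + k

/-- A matroid is 3-connected if it has no 1-separation and no 2-separation. -/
def MatroidThreeConnected (M : Matroid α) : Prop :=
  ¬ MatroidKSeparation M 1 ∧ ¬ MatroidKSeparation M 2

/-- Representability of a matroid over a field `F`. -/
def IsRepresentableOver (M : Matroid α) (F : Type) [Field F] : Prop :=
  ∃ (n : ℕ) (φ : α → (Fin n → F)), ∀ I, I ⊆ M.E →
    (M.Indep I ↔ LinearIndependent F (fun x : I => φ x))

/-- A matroid is regular if it is representable over every field. -/
def IsRegularMatroid (M : Matroid α) : Prop :=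
  ∀ (F : Type) [Field F], IsRepresentableOver M F

end MatroidDefs

section GraphDefs

variable {V W : Type*}

/-- A circle of a graph: the edge set of a cycle. -/
def IsGraphCircle (G : SimpleGraph V) (X : Set (Sym2 V)) : Prop :=
  ∃ (u : V) (c : G.Walk u u), c.IsCycle ∧ X = {e | e ∈ c.edges}

/-- The contraction `G/X` of a set of edges `X` in a graph `G`: vertices are the
connected components of the subgraph formed by the edges of `X`, and distinct
components are adjacent if `G` has an edge outside `X` joining them. -/
def contractGraph (G : SimpleGraph V) (X : Set (Sym2 V)) :
    SimpleGraph (SimpleGraph.fromEdgeSet X ⊓ G).ConnectedComponent :=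
  SimpleGraph.fromRel fun a b => ∃ u v : V, G.Adj u v ∧ s(u, v) ∉ X ∧
    a = (SimpleGraph.fromEdgeSet X ⊓ G).connectedComponentMk u ∧
    b = (SimpleGraph.fromEdgeSet X ⊓ G).connectedComponentMk v

/-- `G` has a minor isomorphic to `H` (branch-set/minor-model definition). -/
def HasGraphMinor (G : SimpleGraph V) (H : SimpleGraph W) : Prop :=
  ∃ φ : W → Set V,
    (∀ w, (φ w).Nonempty) ∧
    (∀ w, ((G.induce (φ w)).Connected)) ∧
    (Pairwise fun w₁ w₂ => Disjoint (φ w₁) (φ w₂)) ∧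
    ∀ ⦃w₁ w₂⦄, H.Adj w₁ w₂ → ∃ v₁ ∈ φ w₁, ∃ v₂ ∈ φ w₂, G.Adj v₁ v₂

/-- The degree of a vertex, as the cardinality of its neighbour set. -/
noncomputable def vDeg (G : SimpleGraph V) (v : V) : ℕ := (G.neighborSet v).ncard

/-- The set of end-vertices of a set of edges. -/
def edgeEndpoints (A : Set (Sym2 V)) : Set V := {v | ∃ e ∈ A, v ∈ e}

/-- A Tutte `k`-separation of a graph: a partition `(A, B)` of the edge set with
`min(|A|,|B|) ≥ k` and exactly `k` vertices in common between `G[A]` and `G[B]`. -/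
def GraphKSeparation (G : SimpleGraph V) (k : ℕ) : Prop :=
  ∃ A B : Set (Sym2 V), A ∪ B = G.edgeSet ∧ Disjoint A B ∧
    k ≤ A.ncard ∧ k ≤ B.ncard ∧ (edgeEndpoints A ∩ edgeEndpoints B).ncard = k

/-- Tutte 3-connectivity of a graph. -/
def GraphThreeConnected (G : SimpleGraph V) : Prop :=
  G.Connected ∧ ¬ GraphKSeparation G 1 ∧ ¬ GraphKSeparation G 2

/-- `M` is the cycle matroid of the graph `G`: the ground set is the edge set of `G`
and the circuits are exactly the circles (edge sets of cycles) of `G`. -/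
def IsCycleMatroidOf (M : Matroid (Sym2 V)) (G : SimpleGraph V) : Prop :=
  M.E = G.edgeSet ∧ ∀ C, IsCircuitOf M C ↔ IsGraphCircle G C

/-- A matroid is graphic if it is isomorphic to the cycle matroid of some graph. -/
def IsGraphicMatroid {α : Type*} (M : Matroid α) : Prop :=
  ∃ (V : Type) (G : SimpleGraph V) (N : Matroid (Sym2 V)),
    IsCycleMatroidOf N G ∧ MatroidIso M N

/-- A matroid is cographic if its dual is graphic. -/
def IsCographicMatroid {α : Type*} (M : Matroid α) : Prop := IsGraphicMatroid M✶

/-- Operation O2 data at a vertex `v`: a partition of the neighbours of `v`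
(of degree at least 4) into two parts of size at least two each (so that both new
vertices have degree greater than 2). -/
def IsO2Partition (G : SimpleGraph V) (v : V) (S₁ S₂ : Set V) : Prop :=
  4 ≤ (G.neighborSet v).ncard ∧ S₁ ∪ S₂ = G.neighborSet v ∧ Disjoint S₁ S₂ ∧
    2 ≤ S₁.ncard ∧ 2 ≤ S₂.ncard

/-- The graph obtained from `G` by operation O2 at `v`, with neighbour partition
`(S₁, S₂)` : the vertex `some v` plays the role of `v₁`, the new vertex `none`
plays the role of `v₂`, and `v₁`, `v₂` are adjacent. -/
def o2Graph (G : SimpleGraph V) (v : V) (S₁ S₂ : Set V) : SimpleGraph (Option V) :=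
  SimpleGraph.fromRel fun a b =>
    (∃ u w, u ≠ v ∧ w ≠ v ∧ G.Adj u w ∧ a = some u ∧ b = some w) ∨
    (∃ u, u ∈ S₁ ∧ a = some v ∧ b = some u) ∨
    (∃ u, u ∈ S₂ ∧ a = none ∧ b = some u) ∨
    (a = some v ∧ b = none)

end GraphDefs

section NamedGraphs

/-- The complete graph `K₅`. -/
def K5 : SimpleGraph (Fin 5) := SimpleGraph.completeGraph (Fin 5)

/-- The complete bipartite graph `K₃,₃`. -/
def K33 : SimpleGraph (Fin 3 ⊕ Fin 3) := completeBipartiteGraph (Fin 3) (Fin 3)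

/-- The complete bipartite graph `K₃,₅`. -/
def K35 : SimpleGraph (Fin 3 ⊕ Fin 5) := completeBipartiteGraph (Fin 3) (Fin 5)

/-- The complete bipartite graph `K₄,₄`. -/
def K44 : SimpleGraph (Fin 4 ⊕ Fin 4) := completeBipartiteGraph (Fin 4) (Fin 4)

/-- `K₄,₄` minus an edge. -/
def K44minus : SimpleGraph (Fin 4 ⊕ Fin 4) :=
  K44.deleteEdges {s(Sum.inl 0, Sum.inr 0)}

/-- The complete bipartite graph `K₃,ₙ`, with side `A` of size 3 and side `B` of size `n`. -/
def K3n (n : ℕ) : SimpleGraph (Fin 3 ⊕ Fin n) := completeBipartiteGraph (Fin 3) (Fin n)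

/-- `K₃,ₙ` plus one edge inside the side `A`. -/
def K3nPlus1 (n : ℕ) : SimpleGraph (Fin 3 ⊕ Fin n) :=
  K3n n ⊔ SimpleGraph.fromEdgeSet {s(Sum.inl 0, Sum.inl 1)}

/-- `K₃,ₙ` plus two edges inside the side `A`. -/
def K3nPlus2 (n : ℕ) : SimpleGraph (Fin 3 ⊕ Fin n) :=
  K3n n ⊔ SimpleGraph.fromEdgeSet {s(Sum.inl 0, Sum.inl 1), s(Sum.inl 0, Sum.inl 2)}

/-- `K₃,ₙ` plus all three edges inside the side `A`. -/
def K3nPlus3 (n : ℕ) : SimpleGraph (Fin 3 ⊕ Fin n) :=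
  K3n n ⊔ SimpleGraph.fromEdgeSet
    {s(Sum.inl 0, Sum.inl 1), s(Sum.inl 0, Sum.inl 2), s(Sum.inl 1, Sum.inl 2)}

/-- The family `{K₃,ₙ, K₃,ₙ⁺¹, K₃,ₙ⁺², K₃,ₙ⁺³}`. -/
def K3nFamily (n : ℕ) : Set (SimpleGraph (Fin 3 ⊕ Fin n)) :=
  {K3n n, K3nPlus1 n, K3nPlus2 n, K3nPlus3 n}

end NamedGraphs

section SignedGraphs

variable {V : Type*}

/-- The number of negative edges of a walk, for a sign function `σ`
(`σ e = false` meaning that `e` is negative). -/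
def negCount (σ : Sym2 V → Bool) {G : SimpleGraph V} {u v : V} (c : G.Walk u v) : ℕ :=
  (c.edges.filter fun e => !σ e).length

/-- Circuits of a signed graph `(G, σ)`: a positive cycle; or two negative cycles
meeting in exactly one vertex; or two vertex-disjoint negative cycles joined by a
path meeting the cycles only in its end vertices. -/
def IsSignedCircuit (G : SimpleGraph V) (σ : Sym2 V → Bool) (C : Set (Sym2 V)) : Prop :=
  (∃ (u : V) (c : G.Walk u u), c.IsCycle ∧ Even (negCount σ c) ∧
      C = {e | e ∈ c.edges}) ∨
  (∃ (w : V) (c₁ c₂ : G.Walk w w), c₁.IsCycle ∧ c₂.IsCycle ∧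
      Odd (negCount σ c₁) ∧ Odd (negCount σ c₂) ∧
      {x | x ∈ c₁.support} ∩ {x | x ∈ c₂.support} = {w} ∧
      C = {e | e ∈ c₁.edges} ∪ {e | e ∈ c₂.edges}) ∨
  (∃ (u v : V) (c₁ : G.Walk u u) (c₂ : G.Walk v v) (p : G.Walk u v),
      c₁.IsCycle ∧ c₂.IsCycle ∧ p.IsPath ∧
      Odd (negCount σ c₁) ∧ Odd (negCount σ c₂) ∧
      {x | x ∈ c₁.support} ∩ {x | x ∈ c₂.support} = ∅ ∧
      {x | x ∈ p.support} ∩ {x | x ∈ c₁.support} = {u} ∧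
      {x | x ∈ p.support} ∩ {x | x ∈ c₂.support} = {v} ∧
      C = {e | e ∈ c₁.edges} ∪ {e | e ∈ c₂.edges} ∪ {e | e ∈ p.edges})

/-- `M` is the signed-graphic matroid of the signed graph `(G, σ)`. -/
def IsSignedGraphicMatroidOf (M : Matroid (Sym2 V)) (G : SimpleGraph V)
    (σ : Sym2 V → Bool) : Prop :=
  M.E = G.edgeSet ∧ ∀ C, IsCircuitOf M C ↔ IsSignedCircuit G σ C

/-- A matroid is signed-graphic if it is isomorphic to the matroid of some signed graph. -/
def IsSignedGraphicMatroid {α : Type*} (M : Matroid α) : Prop :=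
  ∃ (V : Type) (G : SimpleGraph V) (σ : Sym2 V → Bool) (N : Matroid (Sym2 V)),
    IsSignedGraphicMatroidOf N G σ ∧ MatroidIso M N

end SignedGraphs


/-! A cocircuit of `N ＼ D` lies in a cocircuit of `N` that only gains deleted elements, and a
cocircuit of `N ／ K` is already a cocircuit of `N`, disjoint from `K`. So a cocircuit of `N` can be
pulled back, step by step along the deletions and contractions producing `N` from `M`, to a
cocircuit `C` of `M`; deleting the larger cocircuit at a deletion step, and commuting the deletion
past a contraction step, shows that `N ＼ C_N` is obtained from `M ＼ C` by the same operations. -/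

open Set Matroid

variable {α : Type*} {M : Matroid α} {C D : Set α}

lemma mDel_eq_delete : mDel M D = M ＼ D := rfl

lemma mCon_eq_contract : mCon M C = M ／ C := rfl

lemma isCircuitOf_iff : IsCircuitOf M C ↔ M.IsCircuit C := by
  rw [isCircuit_iff_forall_ssubset]
  rfl

lemma isCocircuitOf_iff : IsCocircuitOf M C ↔ M.IsCocircuit C :=
  isCircuitOf_iff

lemma Matroid.IsCocircuit.exists_subset_isCocircuit_of_delete (hC : (M ＼ D).IsCocircuit C) :
    ∃ C', M.IsCocircuit C' ∧ C ⊆ C' ∧ C' ⊆ C ∪ D := by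
  rw [isCocircuit_def, dual_delete] at hC
  exact hC.exists_subset_isCircuit_of_contract

lemma MinorOf.delete_delete_of_subset_union {N : Matroid α} {C' : Set α}
    (h : MinorOf (N ＼ C') M) (hC' : C' ⊆ C ∪ D) : MinorOf (N ＼ D ＼ C) M := by
  have hunion : D ∪ C = C' ∪ (D ∪ C) := by
    rw [union_eq_right.2 (hC'.trans (union_comm C D).subset)]
  rw [delete_delete, hunion, ← delete_delete]
  exact h.del (D ∪ C)

/-- If `N` is a minor of a matroid `M` then for any cocircuit `C_N` of `N`
there exists a cocircuit `C_M` of `M` such that `N \ C_N` is a minor of `M \ C_M`. -/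
theorem statement_0 {α : Type} (M N : Matroid α) (hNM : MinorOf N M)
    (C_N : Set α) (hCN : IsCocircuitOf N C_N) :
    ∃ C_M : Set α, IsCocircuitOf M C_M ∧ MinorOf (mDel N C_N) (mDel M C_M) := by
  simp only [isCocircuitOf_iff] at hCN ⊢
  induction hNM generalizing C_N with
  | refl => exact ⟨C_N, hCN, .refl _⟩
  | del D _ ih =>
    obtain ⟨C', hC', -, hC'ss⟩ := hCN.exists_subset_isCocircuit_of_delete
    obtain ⟨C_M, hCM, hminor⟩ := ih C' hC'
    exact ⟨C_M, hCM, hminor.delete_delete_of_subset_union hC'ss⟩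
  | con K _ ih =>
    obtain ⟨hCN, hdisj⟩ := contract_isCocircuit_iff.1 hCN
    obtain ⟨C_M, hCM, hminor⟩ := ih C_N hCN
    refine ⟨C_M, hCM, ?_⟩
    rw [mDel_eq_delete, mCon_eq_contract, contract_delete_comm _ hdisj.symm]
    exact hminor.con K
end

section
/- Let 𝒞 be a class of matroids closed under isomorphism and under taking minors. If M is a matroid such that M\Y belongs to 𝒞 for every cocircuit Y of M, and N is a minor of M, then N\Y' belongs to 𝒞 for every cocircuit Y' of N. (In particular, the property of having all cocircuits graphic is minor-closed.) -/
section SignedGraphs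

variable {V : Type*}

/-! A cocircuit of `M ／ C` is a cocircuit of `M` avoiding `C`, and `C` may be contracted after
deleting it; a cocircuit `K` of `M ＼ D` lies in a cocircuit `K₀ ⊆ K ∪ D` of `M`, so that
`M ＼ D ＼ K = M ＼ K₀ ＼ D`. In both cases the cocircuit-deletion of the minor is a minor of a
cocircuit-deletion of `M`, and induction on the sequence of deletions and contractions finishes. -/

namespace Matroid

open Set

variable {α : Type*} {𝒞 : Matroid α → Prop} {M N : Matroid α} {C D K : Set α}

lemma isCircuitOf_iff_isCircuit : IsCircuitOf M C ↔ M.IsCircuit C := by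
  rw [isCircuit_iff_forall_ssubset]
  rfl

lemma isCocircuitOf_iff_isCocircuit : IsCocircuitOf M K ↔ M.IsCocircuit K :=
  isCircuitOf_iff_isCircuit

lemma IsCocircuit.exists_subset_isCocircuit_of_delete_s2 (hK : (M ＼ D).IsCocircuit K) :
    ∃ K₀, M.IsCocircuit K₀ ∧ K ⊆ K₀ ∧ K₀ ⊆ K ∪ D := by
  rw [isCocircuit_def, dual_delete] at hK
  exact hK.exists_subset_isCircuit_of_contract

def CocircuitDeletionsIn (𝒞 : Matroid α → Prop) (M : Matroid α) : Prop :=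
  ∀ K, M.IsCocircuit K → 𝒞 (M ＼ K)

lemma CocircuitDeletionsIn.delete (hdel : ∀ (M : Matroid α) D, 𝒞 M → 𝒞 (M ＼ D))
    (hM : CocircuitDeletionsIn 𝒞 M) (D : Set α) : CocircuitDeletionsIn 𝒞 (M ＼ D) := by
  intro K hK
  obtain ⟨K₀, hK₀, hKK₀, hK₀KD⟩ := hK.exists_subset_isCocircuit_of_delete_s2
  have hunion : D ∪ K = K₀ ∪ D :=
    (union_comm D K).trans <| subset_antisymm
      (union_subset_union_left D hKK₀) (union_subset hK₀KD subset_union_right)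
  rw [delete_delete, hunion, ← delete_delete]
  exact hdel _ D (hM K₀ hK₀)

lemma CocircuitDeletionsIn.contract (hcon : ∀ (M : Matroid α) C, 𝒞 M → 𝒞 (M ／ C))
    (hM : CocircuitDeletionsIn 𝒞 M) (C : Set α) : CocircuitDeletionsIn 𝒞 (M ／ C) := by
  intro K hK
  obtain ⟨hK, hKC⟩ := contract_isCocircuit_iff.1 hK
  rw [contract_delete_comm _ hKC.symm]
  exact hcon _ C (hM K hK)

lemma CocircuitDeletionsIn.of_minorOf (hdel : ∀ (M : Matroid α) D, 𝒞 M → 𝒞 (M ＼ D))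
    (hcon : ∀ (M : Matroid α) C, 𝒞 M → 𝒞 (M ／ C)) (hM : CocircuitDeletionsIn 𝒞 M)
    (hN : MinorOf N M) : CocircuitDeletionsIn 𝒞 N := by
  induction hN with
  | refl => exact hM
  | del D _ ih => exact (ih hM).delete hdel D
  | con C _ ih => exact (ih hM).contract hcon C

end Matroid

theorem statement_2_general (𝒞 : ∀ ⦃α : Type⦄, Matroid α → Prop)
    (h_minor : ∀ {α : Type} (M N : Matroid α), 𝒞 M → MinorOf N M → 𝒞 N)
    {α : Type} (M : Matroid α)
    (hM : ∀ Y, IsCocircuitOf M Y → 𝒞 (mDel M Y))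
    (N : Matroid α) (hN : MinorOf N M) :
    ∀ Y', IsCocircuitOf N Y' → 𝒞 (mDel N Y') := by
  have hN' : Matroid.CocircuitDeletionsIn (fun M : Matroid α ↦ 𝒞 M) N :=
    Matroid.CocircuitDeletionsIn.of_minorOf
      (fun M D h ↦ h_minor _ _ h (.del D (.refl M)))
      (fun M C h ↦ h_minor _ _ h (.con C (.refl M)))
      (fun K hK ↦ hM K (Matroid.isCocircuitOf_iff_isCocircuit.2 hK)) hN
  exact fun Y' hY' ↦ hN' Y' (Matroid.isCocircuitOf_iff_isCocircuit.1 hY')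

/-- If `𝒞` is a class of matroids closed under isomorphism and minors, `M`
is a matroid all of whose cocircuit-deletions lie in `𝒞`, and `N` is a minor of `M`, then
all cocircuit-deletions of `N` lie in `𝒞`. -/
theorem statement_2 (𝒞 : ∀ ⦃α : Type⦄, Matroid α → Prop)
    (h_iso : ∀ {α β : Type} (M : Matroid α) (N : Matroid β), 𝒞 M → MatroidIso M N → 𝒞 N)
    (h_minor : ∀ {α : Type} (M N : Matroid α), 𝒞 M → MinorOf N M → 𝒞 N)
    {α : Type} (M : Matroid α)
    (hM : ∀ Y, IsCocircuitOf M Y → 𝒞 (mDel M Y))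
    (N : Matroid α) (hN : MinorOf N M) :
    ∀ Y', IsCocircuitOf N Y' → 𝒞 (mDel N Y') :=
  statement_2_general 𝒞 h_minor M hM N hN
end SignedGraphs
end

section
/- Let G be one of the graphs K_{3,n}, K^{+1}_{3,n}, K^{+2}_{3,n}, K^{+3}_{3,n} with n ≥ 5, let B be the set of vertices of G of degree 3, and let G_e be obtained from G by adding a new edge e between two non-adjacent vertices both lying in B. Then there exists a circle X of G_e such that the contraction G_e/X has a minor isomorphic to K_{3,3}. -/
/-! The vertices of degree 3 lie in the side of size `n ≥ 5`, so `e` joins two vertices `b₁, b₂`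
of that side, and `X` can be taken to be the triangle `b₁ a₀ b₂` for a vertex `a₀` of the side of
size 3. Contracting `X` identifies only `b₁, a₀, b₂`; the resulting vertex, the other two vertices
of the small side and three further vertices of the large side span a `K₃,₃` of `G_e / X`. -/

open SimpleGraph

section Contraction

variable {V W : Type*}

lemma SimpleGraph.Reachable.eq_of_forall_not_adj {G : SimpleGraph V} {a b : V}
    (hb : ∀ c, ¬ G.Adj b c) (h : G.Reachable a b) : a = b := by
  obtain ⟨p⟩ := h.symm
  cases p with
  | nil => rfl
  | cons hadj _ => exact absurd hadj (hb _)

lemma hasGraphMinor_of_injective_hom {G : SimpleGraph V} {H : SimpleGraph W} (f : H →g G)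
    (hf : Function.Injective f) : HasGraphMinor G H := by
  refine ⟨fun w => {f w}, fun w => Set.singleton_nonempty _, fun w => ?_,
    fun w₁ w₂ h => Set.disjoint_singleton.2 (hf.ne h),
    fun w₁ w₂ h => ⟨_, rfl, _, rfl, f.map_adj h⟩⟩
  exact (G.induce {f w}).connected_iff_exists_forall_reachable.2
    ⟨⟨f w, rfl⟩, fun ⟨x, hx⟩ => by obtain rfl : x = f w := hx; rfl⟩

variable {G : SimpleGraph V} {X : Set (Sym2 V)}

lemma connectedComponentMk_injOn_insert_compl_edgeEndpoints (a : V) :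
    Set.InjOn (fromEdgeSet X ⊓ G).connectedComponentMk (insert a (edgeEndpoints X)ᶜ) := by
  have eq_of_mk_eq : ∀ x y, y ∉ edgeEndpoints X →
      (fromEdgeSet X ⊓ G).connectedComponentMk x = (fromEdgeSet X ⊓ G).connectedComponentMk y →
      x = y := fun x y hy h =>
    (ConnectedComponent.exact h).eq_of_forall_not_adj fun c (hc : (fromEdgeSet X ⊓ G).Adj y c) =>
      hy ⟨_, hc.1.1, Sym2.mem_mk_left _ _⟩
  rintro x (rfl | hx) y (rfl | hy) h
  · rfl
  · exact eq_of_mk_eq _ _ hy h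
  · exact (eq_of_mk_eq _ _ hx h.symm).symm
  · exact eq_of_mk_eq _ _ hy h

lemma contractGraph_adj_of_not_mem_edgeEndpoints {a b : V} (hab : G.Adj a b)
    (hb : b ∉ edgeEndpoints X) :
    (contractGraph G X).Adj ((fromEdgeSet X ⊓ G).connectedComponentMk a)
      ((fromEdgeSet X ⊓ G).connectedComponentMk b) := by
  refine ⟨fun h => hab.ne ?_,
    Or.inl ⟨a, b, hab, fun hX => hb ⟨_, hX, Sym2.mem_mk_right _ _⟩, rfl, rfl⟩⟩
  exact connectedComponentMk_injOn_insert_compl_edgeEndpoints a (Set.mem_insert _ _) (Or.inr hb) h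

lemma hasGraphMinor_contractGraph {H : SimpleGraph W} (f : H →g G) (hf : Function.Injective f)
    (w₀ : W) (hX : ∀ w, w ≠ w₀ → f w ∉ edgeEndpoints X) : HasGraphMinor (contractGraph G X) H := by
  have hmem : ∀ w, f w ∈ insert (f w₀) (edgeEndpoints X)ᶜ := fun w => by
    rcases eq_or_ne w w₀ with rfl | hw
    · exact Set.mem_insert _ _
    · exact Or.inr (hX w hw)
  refine hasGraphMinor_of_injective_hom ⟨fun w => (fromEdgeSet X ⊓ G).connectedComponentMk (f w),
    fun {w w'} h => ?_⟩ fun w w' h => hf (connectedComponentMk_injOn_insert_compl_edgeEndpoints _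
      (hmem w) (hmem w') h)
  rcases eq_or_ne w' w₀ with rfl | hw'
  · exact (contractGraph_adj_of_not_mem_edgeEndpoints (f.map_adj h.symm) (hX w h.ne)).symm
  · exact contractGraph_adj_of_not_mem_edgeEndpoints (f.map_adj h) (hX w' hw')

end Contraction

lemma isGraphCircle_triangle {V : Type*} {G : SimpleGraph V} {a b c : V} (hab : G.Adj a b)
    (hbc : G.Adj b c) (hca : G.Adj c a) : IsGraphCircle G {s(a, b), s(b, c), s(c, a)} := by
  refine ⟨a, .cons hab (.cons hbc (.cons hca .nil)), ?_, by ext; simp⟩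
  rw [Walk.isCycle_def]
  refine ⟨⟨?_⟩, by simp, ?_⟩
  · simp [hab.ne, hbc.ne, hca.ne, hab.ne.symm, hca.ne.symm]
  · simp [hab.ne.symm, hbc.ne, hca.ne]

lemma edgeEndpoints_triangle {V : Type*} (a b c : V) :
    edgeEndpoints {s(a, b), s(b, c), s(c, a)} = {a, b, c} := by
  ext v
  simp only [edgeEndpoints, Set.mem_insert_iff, Set.mem_singleton_iff, Set.mem_ofPred_eq]
  constructor
  · rintro ⟨e, (rfl | rfl | rfl), he⟩ <;> simp at he <;> tauto
  · rintro (rfl | rfl | rfl) <;> simp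

lemma Finset.exists_fin_embedding_compl {α : Type*} [Fintype α] [DecidableEq α] (s : Finset α)
    {m : ℕ} (h : m + s.card ≤ Fintype.card α) : ∃ R : Fin m ↪ α, ∀ k, R k ∉ s := by
  obtain ⟨e⟩ := Function.Embedding.nonempty_of_card_le (α := Fin m) (β := (sᶜ : Finset α)) (by
    rw [Fintype.card_fin, Fintype.card_coe, Finset.card_compl]; omega)
  exact ⟨e.trans (Function.Embedding.subtype _), fun k => Finset.mem_compl.1 (e k).2⟩

lemma vDeg_mono {V : Type*} [Finite V] {G G' : SimpleGraph V} (h : G ≤ G') (v : V) :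
    vDeg G v ≤ vDeg G' v :=
  Set.ncard_le_ncard (fun _ hw => h hw) (Set.toFinite _)

lemma vDeg_K3n_inl (n : ℕ) (a : Fin 3) : vDeg (K3n n) (Sum.inl a) = n := by
  have : (K3n n).neighborSet (Sum.inl a) = Set.range Sum.inr := by
    ext (x | x) <;> simp [K3n]
  rw [vDeg, this, ← Set.image_univ, Set.ncard_image_of_injective _ Sum.inr_injective,
    Set.ncard_univ, Nat.card_eq_fintype_card, Fintype.card_fin]

lemma K3n_le_of_mem_K3nFamily {n : ℕ} {H : SimpleGraph (Fin 3 ⊕ Fin n)} (hH : H ∈ K3nFamily n) :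
    K3n n ≤ H := by
  rcases hH with rfl | rfl | rfl | rfl
  · exact le_rfl
  all_goals exact le_sup_left

lemma exists_eq_inr_of_vDeg_lt {n : ℕ} {H : SimpleGraph (Fin 3 ⊕ Fin n)} (hH : K3n n ≤ H)
    {u : Fin 3 ⊕ Fin n} (hu : vDeg H u < n) : ∃ i, u = Sum.inr i := by
  rcases u with a | i
  · exact absurd ((vDeg_K3n_inl n a).symm.trans_le (vDeg_mono hH _)) hu.not_ge
  · exact ⟨i, rfl⟩

theorem statement_8_general (n : ℕ) (hn : 5 ≤ n)
    (H : SimpleGraph (Fin 3 ⊕ Fin n)) (hH : H ∈ K3nFamily n)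
    (u v : Fin 3 ⊕ Fin n) (hu : vDeg H u = 3) (hv : vDeg H v = 3)
    (huv : u ≠ v) :
    ∃ X : Set (Sym2 (Fin 3 ⊕ Fin n)),
      IsGraphCircle (H ⊔ SimpleGraph.fromEdgeSet {s(u, v)}) X ∧
      HasGraphMinor (contractGraph (H ⊔ SimpleGraph.fromEdgeSet {s(u, v)}) X) K33 := by
  have hK : K3n n ≤ H := K3n_le_of_mem_K3nFamily hH
  obtain ⟨i, rfl⟩ := exists_eq_inr_of_vDeg_lt hK (hu.trans_lt (by omega))
  obtain ⟨j, rfl⟩ := exists_eq_inr_of_vDeg_lt hK (hv.trans_lt (by omega))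
  set G := H ⊔ fromEdgeSet {s(Sum.inr i, Sum.inr j)}
  have hG : K3n n ≤ G := hK.trans le_sup_left
  have hAB (a : Fin 3) (k : Fin n) : G.Adj (Sum.inl a) (Sum.inr k) := hG (by simp [K3n])
  have hji : G.Adj (Sum.inr j) (Sum.inr i) := Or.inr (by simpa [Sym2.eq_swap] using huv.symm)
  obtain ⟨R, hR⟩ := Finset.exists_fin_embedding_compl {i, j} (m := 3) (by
    rw [Finset.card_pair (fun h => huv (congrArg _ h)), Fintype.card_fin]; omega)
  refine ⟨_, isGraphCircle_triangle (hAB 0 i).symm (hAB 0 j) hji, ?_⟩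
  let f : K33 →g G := ⟨Sum.map id R, fun {w w'} h => hG (by
    rcases w with _ | _ <;> rcases w' with _ | _ <;> simp_all [K33, K3n])⟩
  refine hasGraphMinor_contractGraph f (Sum.map_injective.2 ⟨Function.injective_id, R.injective⟩)
    (Sum.inl 0) ?_
  rw [edgeEndpoints_triangle]
  rintro (a | k) hw
  · simpa [f] using hw
  · simpa [f] using hR k

/-- Adding an edge `e` between two non-adjacent degree-3 vertices of a graph
in `{K₃,ₙ, K₃,ₙ⁺¹, K₃,ₙ⁺², K₃,ₙ⁺³}` (`n ≥ 5`) yields a graph `G_e` having a circle `X`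
such that `G_e/X` has a `K₃,₃`-minor. -/
theorem statement_8 (n : ℕ) (hn : 5 ≤ n)
    (H : SimpleGraph (Fin 3 ⊕ Fin n)) (hH : H ∈ K3nFamily n)
    (u v : Fin 3 ⊕ Fin n) (hu : vDeg H u = 3) (hv : vDeg H v = 3)
    (huv : u ≠ v) (hadj : ¬ H.Adj u v) :
    ∃ X : Set (Sym2 (Fin 3 ⊕ Fin n)),
      IsGraphCircle (H ⊔ SimpleGraph.fromEdgeSet {s(u, v)}) X ∧
      HasGraphMinor (contractGraph (H ⊔ SimpleGraph.fromEdgeSet {s(u, v)}) X) K33 :=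
  statement_8_general n hn H hH u v hu hv huv
end

section
/- For every n ≥ 5, every graph H among K_{3,n}, K^{+1}_{3,n}, K^{+2}_{3,n}, K^{+3}_{3,n}, and every circle X of H, the contraction H/X has no minor isomorphic to K_{3,3}; indeed every cycle of H contains at least two vertices of the side A, so H/X has at most two vertices of degree greater than 3. -/
/-!
Every edge of a graph `H` in the family meets the side `A`, so `A` is a vertex cover. A cycle
with at most one vertex of a vertex cover is impossible: a vertex off the cover has both its
cycle-neighbours in the cover, and they are distinct. Hence the circle `X` passes through two
vertices of `A`, which fall into the same vertex of `H/X`. The image of `A` is then a vertex cover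
of `H/X` with at most two vertices, so every other vertex of `H/X` has degree at most two, and a
`K₃,₃`-model has a branch set on each side avoiding this cover, joined by an edge that misses it.
-/

open SimpleGraph

lemma exists_disjoint_of_ncard_lt_card {ι β : Type*} {φ : ι → Set β}
    (hφ : Pairwise fun i j => Disjoint (φ i) (φ j)) {S : Set β} (hS : S.Finite)
    (hlt : S.ncard < Nat.card ι) : ∃ i, Disjoint (φ i) S := by
  by_contra! hmeet
  choose f hfφ hfS using fun i => Set.not_disjoint_iff.mp (hmeet i)
  have hf : Function.Injective fun i => (⟨f i, hfS i⟩ : S) := by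
    intro i j hij
    by_contra hne
    have hfij : f i = f j := congrArg Subtype.val hij
    exact Set.disjoint_left.mp (hφ hne) (hfφ i) (hfij ▸ hfφ j)
  have := hS.to_subtype
  have := Nat.card_le_card_of_injective _ hf
  rw [Nat.card_coe_set_eq] at this
  omega

section VertexCover

variable {V : Type*} {G : SimpleGraph V} {A : Set V}

namespace SimpleGraph.IsVertexCover

lemma exists_ne_mem_support_of_isCycle (hA : G.IsVertexCover A) {u : V} {c : G.Walk u u}
    (hc : c.IsCycle) : ∃ a ∈ A, ∃ b ∈ A, a ≠ b ∧ a ∈ c.support ∧ b ∈ c.support := by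
  have hlen := hc.three_le_length
  by_cases hu : u ∈ A
  · have hne : ∀ i, 0 < i → i < c.length → u ≠ c.getVert i := fun i hi0 hi h => by
      rw [eq_comm, hc.getVert_endpoint_iff hi.le] at h
      omega
    rcases hA (c.adj_getVert_succ (i := 1) (by omega)) with h | h
    · exact ⟨u, hu, _, h, hne 1 (by omega) (by omega), c.start_mem_support, c.getVert_mem_support 1⟩
    · exact ⟨u, hu, _, h, hne 2 (by omega) (by omega), c.start_mem_support, c.getVert_mem_support 2⟩
  · have hsnd : c.snd ∈ A := (hA (c.adj_snd hc.not_nil)).resolve_left hu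
    have hpen : c.penultimate ∈ A := (hA (c.adj_penultimate hc.not_nil)).resolve_right hu
    exact ⟨c.snd, hsnd, c.penultimate, hpen, hc.snd_ne_penultimate,
      c.getVert_mem_support 1, c.getVert_mem_support _⟩

lemma two_le_ncard_of_isCycle (hA : G.IsVertexCover A) {u : V} {c : G.Walk u u}
    (hc : c.IsCycle) : 2 ≤ {w | w ∈ c.support ∧ w ∈ A}.ncard := by
  obtain ⟨a, ha, b, hb, hab, hac, hbc⟩ := hA.exists_ne_mem_support_of_isCycle hc
  have hfin : {w | w ∈ c.support ∧ w ∈ A}.Finite :=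
    c.support.finite_toSet.subset fun _ hw => hw.1
  exact (Set.one_lt_ncard_iff hfin).mpr ⟨a, b, ⟨hac, ha⟩, ⟨hbc, hb⟩, hab⟩

lemma vDeg_le_ncard (hA : G.IsVertexCover A) (hfin : A.Finite) {w : V} (hw : w ∉ A) :
    vDeg G w ≤ A.ncard :=
  Set.ncard_le_ncard (fun _ hz => (hA hz).resolve_left hw) hfin

lemma not_hasGraphMinor_K33 (hA : G.IsVertexCover A) (hfin : A.Finite) (hA2 : A.ncard ≤ 2) :
    ¬ HasGraphMinor G K33 := by
  rintro ⟨φ, -, -, hdisj, hadj⟩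
  have hlt : A.ncard < Nat.card (Fin 3) := by rw [Nat.card_fin]; omega
  obtain ⟨i, hi⟩ := exists_disjoint_of_ncard_lt_card (φ := fun i => φ (Sum.inl i))
    (fun _ _ h => hdisj (Sum.inl_injective.ne h)) hfin hlt
  obtain ⟨j, hj⟩ := exists_disjoint_of_ncard_lt_card (φ := fun j => φ (Sum.inr j))
    (fun _ _ h => hdisj (Sum.inr_injective.ne h)) hfin hlt
  obtain ⟨v₁, hv₁, v₂, hv₂, hv⟩ := hadj (show K33.Adj (Sum.inl i) (Sum.inr j) by simp [K33])
  rcases hA hv with h | h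
  · exact Set.disjoint_left.mp hi hv₁ h
  · exact Set.disjoint_left.mp hj hv₂ h

lemma contractGraph (hA : G.IsVertexCover A) (X : Set (Sym2 V)) :
    (contractGraph G X).IsVertexCover ((fromEdgeSet X ⊓ G).connectedComponentMk '' A) := by
  rintro a b hab
  obtain ⟨-, ⟨u, v, huv, -, rfl, rfl⟩ | ⟨u, v, huv, -, rfl, rfl⟩⟩ := hab
  all_goals rcases hA huv with h | h
  exacts [.inl ⟨u, h, rfl⟩, .inr ⟨v, h, rfl⟩, .inr ⟨u, h, rfl⟩, .inl ⟨v, h, rfl⟩]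

end SimpleGraph.IsVertexCover

lemma SimpleGraph.Walk.connectedComponentMk_eq_of_mem_support {u v w : V} (c : G.Walk u v)
    (hw : w ∈ c.support) :
    (fromEdgeSet {e | e ∈ c.edges} ⊓ G).connectedComponentMk w =
      (fromEdgeSet {e | e ∈ c.edges} ⊓ G).connectedComponentMk u := by
  classical
  have hedges : ∀ e ∈ c.edges, e ∈ (fromEdgeSet {e | e ∈ c.edges} ⊓ G).edgeSet := fun e he => by
    rw [edgeSet_inf, edgeSet_fromEdgeSet]
    exact ⟨⟨he, G.not_isDiag_of_mem_edgeSet (c.edges_subset_edgeSet he)⟩, c.edges_subset_edgeSet he⟩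
  have hw' : w ∈ (c.transfer _ hedges).support := by rwa [c.support_transfer]
  exact ConnectedComponent.sound ((c.transfer _ hedges).takeUntil w hw').reachable.symm

lemma IsGraphCircle.ncard_image_connectedComponentMk_lt {X : Set (Sym2 V)}
    (hX : IsGraphCircle G X) (hA : G.IsVertexCover A) (hfin : A.Finite) :
    ((fromEdgeSet X ⊓ G).connectedComponentMk '' A).ncard < A.ncard := by
  obtain ⟨u, c, hc, rfl⟩ := hX
  obtain ⟨a, ha, b, hb, hab, hac, hbc⟩ := hA.exists_ne_mem_support_of_isCycle hc
  refine (Set.ncard_image_le hfin).lt_of_ne fun hcard => hab ?_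
  exact Set.injOn_of_ncard_image_eq hcard hfin ha hb
    ((c.connectedComponentMk_eq_of_mem_support hac).trans
      (c.connectedComponentMk_eq_of_mem_support hbc).symm)

end VertexCover

lemma isVertexCover_range_inl_of_mem_K3nFamily {n : ℕ} {H : SimpleGraph (Fin 3 ⊕ Fin n)}
    (hH : H ∈ K3nFamily n) : H.IsVertexCover (Set.range Sum.inl) := by
  rcases hH with rfl | rfl | rfl | rfl <;> rintro (a | a) (b | b) h <;>
    simp_all [K3n, K3nPlus1, K3nPlus2, K3nPlus3]

theorem statement_11_general (n : ℕ)
    (H : SimpleGraph (Fin 3 ⊕ Fin n)) (hH : H ∈ K3nFamily n)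
    (X : Set (Sym2 (Fin 3 ⊕ Fin n))) (hX : IsGraphCircle H X) :
    (∀ (u : Fin 3 ⊕ Fin n) (c : H.Walk u u), c.IsCycle →
      2 ≤ {w | w ∈ c.support ∧
            w ∈ Set.range (Sum.inl : Fin 3 → Fin 3 ⊕ Fin n)}.ncard) ∧
    {w | 3 < vDeg (contractGraph H X) w}.ncard ≤ 2 ∧
    ¬ HasGraphMinor (contractGraph H X) K33 := by
  have hA := isVertexCover_range_inl_of_mem_K3nFamily hH
  set S := (fromEdgeSet X ⊓ H).connectedComponentMk '' Set.range Sum.inl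
  have hS : (contractGraph H X).IsVertexCover S := hA.contractGraph X
  have hSfin : S.Finite := Set.toFinite S
  have hS2 : S.ncard ≤ 2 := by
    have := hX.ncard_image_connectedComponentMk_lt hA (Set.finite_range _)
    rw [Set.ncard_range_of_injective Sum.inl_injective, Nat.card_fin] at this
    exact Nat.le_of_lt_succ this
  refine ⟨fun _ _ hc => hA.two_le_ncard_of_isCycle hc, ?_, hS.not_hasGraphMinor_K33 hSfin hS2⟩
  have hdeg : {w | 3 < vDeg (contractGraph H X) w} ⊆ S := fun w hw => by
    by_contra hwS
    have hw' : 3 < vDeg (contractGraph H X) w := hw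
    have := hS.vDeg_le_ncard hSfin hwS
    omega
  exact (Set.ncard_le_ncard hdeg hSfin).trans hS2

/-- For every `n ≥ 5`, every `H` in `{K₃,ₙ, K₃,ₙ⁺¹, K₃,ₙ⁺², K₃,ₙ⁺³}` and
every circle `X` of `H`, the contraction `H/X` has no `K₃,₃`-minor; indeed every cycle of
`H` contains at least two vertices of the side `A`, so `H/X` has at most two vertices of
degree greater than `3`. -/
theorem statement_11 (n : ℕ) (hn : 5 ≤ n)
    (H : SimpleGraph (Fin 3 ⊕ Fin n)) (hH : H ∈ K3nFamily n)
    (X : Set (Sym2 (Fin 3 ⊕ Fin n))) (hX : IsGraphCircle H X) :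
    (∀ (u : Fin 3 ⊕ Fin n) (c : H.Walk u u), c.IsCycle →
      2 ≤ {w | w ∈ c.support ∧
            w ∈ Set.range (Sum.inl : Fin 3 → Fin 3 ⊕ Fin n)}.ncard) ∧
    {w | 3 < vDeg (contractGraph H X) w}.ncard ≤ 2 ∧
    ¬ HasGraphMinor (contractGraph H X) K33 :=
  statement_11_general n H hH X hX
end

section
/- Let G be K_{4,4}^- or K_{4,4}, with bipartition (V_1, V_2) of its vertex set, and let G_e be obtained from G by adding a new edge e between two non-adjacent vertices lying in the same side of the bipartition. Then there exists a circle X of G_e such that the contraction G_e/X has a minor isomorphic to K_{3,3}. -/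
/-! Adding the edge `xy` inside one side of `K₄,₄⁻` creates a triangle `x y z` with `z` on the
other side. Contracting this triangle merges `y` and `z` into `x`, and only `x` among the remaining
vertices touches it, so `x`, the two other vertices of its side and the three other vertices of
the opposite side still span a `K₃,₃` with singleton branch sets. It only remains to choose the
roles of the endpoints and the vertex `z` so that the missing edge of `K₄,₄⁻` is incident to `y`
or `z`, hence not needed by this `K₃,₃`. -/

namespace SimpleGraph

variable {V W : Type*} {G : SimpleGraph V} {H : SimpleGraph W}

lemma eq_of_connectedComponentMk_eq_of_forall_not_adj {x y : V} (hx : ∀ z, ¬ G.Adj x z)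
    (h : G.connectedComponentMk x = G.connectedComponentMk y) : x = y := by
  obtain ⟨p⟩ := ConnectedComponent.exact h
  cases p with
  | nil => rfl
  | cons hxz _ => exact absurd hxz (hx _)

lemma hasGraphMinor_of_copy (r : H.Copy G) : HasGraphMinor G H := by
  refine ⟨fun w => {r w}, fun w => Set.singleton_nonempty _, fun w => ?_, ?_, ?_⟩
  · rw [induce_singleton_eq_top]
    exact connected_top
  · exact fun w₁ w₂ hne => Set.disjoint_singleton.mpr (r.injective.ne hne)
  · exact fun w₁ w₂ hadj => ⟨_, rfl, _, rfl, r.toHom.map_adj hadj⟩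

section Contraction

variable {X : Set (Sym2 V)}

lemma eq_of_connectedComponentMk_eq_of_notMem_edgeEndpoints {x y : V}
    (hx : x ∉ edgeEndpoints X)
    (h : (fromEdgeSet X ⊓ G).connectedComponentMk x = (fromEdgeSet X ⊓ G).connectedComponentMk y) :
    x = y :=
  eq_of_connectedComponentMk_eq_of_forall_not_adj
    (fun z (hz : (fromEdgeSet X ⊓ G).Adj x z) => hx ⟨s(x, z), hz.1.1, Sym2.mem_mk_left x z⟩) h

lemma hasGraphMinor_contractGraph_of_copy (r : H.Copy G)
    (hX : (Set.range r ∩ edgeEndpoints X).Subsingleton) :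
    HasGraphMinor (contractGraph G X) H := by
  have hmk_inj : Function.Injective fun z => (fromEdgeSet X ⊓ G).connectedComponentMk (r z) := by
    intro z₁ z₂ h
    apply r.injective
    by_cases h₁ : r z₁ ∈ edgeEndpoints X
    · by_cases h₂ : r z₂ ∈ edgeEndpoints X
      · exact hX ⟨⟨z₁, rfl⟩, h₁⟩ ⟨⟨z₂, rfl⟩, h₂⟩
      · exact
          (eq_of_connectedComponentMk_eq_of_notMem_edgeEndpoints h₂ h.symm).symm
    · exact eq_of_connectedComponentMk_eq_of_notMem_edgeEndpoints h₁ h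
  refine hasGraphMinor_of_copy
    ⟨⟨fun z => (fromEdgeSet X ⊓ G).connectedComponentMk (r z), fun {z₁ z₂} hadj => ?_⟩, hmk_inj⟩
  have hG : G.Adj (r z₁) (r z₂) := r.toHom.map_adj hadj
  have hnotX : s(r z₁, r z₂) ∉ X := fun he =>
    hG.ne (hX ⟨⟨z₁, rfl⟩, _, he, Sym2.mem_mk_left _ _⟩ ⟨⟨z₂, rfl⟩, _, he, Sym2.mem_mk_right _ _⟩)
  exact ⟨hmk_inj.ne hadj.ne, Or.inl ⟨r z₁, r z₂, hG, hnotX, rfl, rfl⟩⟩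

end Contraction

lemma isGraphCircle_triangle {u v w : V} (huv : G.Adj u v) (hvw : G.Adj v w) (hwu : G.Adj w u) :
    IsGraphCircle G {s(u, v), s(v, w), s(w, u)} := by
  refine ⟨u, .cons huv (.cons hvw (.cons hwu .nil)), ?_, ?_⟩
  · rw [Walk.cons_isCycle_iff]
    simp [Walk.isPath_def, huv.ne, hvw.ne, hwu.ne, hwu.ne.symm, huv.ne.symm]
  · ext e
    simp

lemma edgeEndpoints_triangle (u v w : V) :
    edgeEndpoints ({s(u, v), s(v, w), s(w, u)} : Set (Sym2 V)) = {u, v, w} := by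
  ext x
  simp only [edgeEndpoints, Set.mem_insert_iff, Set.mem_singleton_iff, exists_eq_or_imp,
    Sym2.mem_iff, ↓existsAndEq, true_and, Set.mem_ofPred_eq]
  tauto

theorem exists_isGraphCircle_hasGraphMinor_contractGraph (r : H.Copy G) {u v w : V}
    (huv : G.Adj u v) (hvw : G.Adj v w) (hwu : G.Adj w u)
    (hv : v ∉ Set.range r) (hw : w ∉ Set.range r) :
    ∃ X, IsGraphCircle G X ∧ HasGraphMinor (contractGraph G X) H := by
  refine ⟨_, isGraphCircle_triangle huv hvw hwu, hasGraphMinor_contractGraph_of_copy r ?_⟩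
  rw [edgeEndpoints_triangle]
  refine Set.subsingleton_of_subset_singleton (a := u) fun x ⟨hx, hxt⟩ => ?_
  rcases hxt with rfl | rfl | rfl
  exacts [rfl, absurd hx hv, absurd hx hw]

end SimpleGraph

open SimpleGraph

section CompleteBipartite

variable {V : Type*} {G : SimpleGraph V} {f g : Fin 4 → V}

structure IsK44MinusIn (G : SimpleGraph V) (f g : Fin 4 → V) : Prop where
  injective_left : Function.Injective f
  injective_right : Function.Injective g
  left_ne_right : ∀ i j, f i ≠ g j
  adj : ∀ i j, i ≠ 0 ∨ j ≠ 0 → G.Adj (f i) (g j)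

lemma IsK44MinusIn.exists_K33_copy_avoiding (hK : IsK44MinusIn G f g) {t q : Fin 4}
    (htq : t = 0 ∨ q = 0) : ∃ r : K33.Copy G, f t ∉ Set.range r ∧ g q ∉ Set.range r := by
  let r : Fin 3 ⊕ Fin 3 → V := Sum.elim (f ∘ t.succAbove) (g ∘ q.succAbove)
  have hadj (i j : Fin 3) : G.Adj (r (.inl i)) (r (.inr j)) := by
    refine hK.adj _ _ ?_
    rcases htq with rfl | rfl
    exacts [Or.inl (Fin.succAbove_ne 0 i), Or.inr (Fin.succAbove_ne 0 j)]
  have hr : Function.Injective r :=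
    (hK.injective_left.comp Fin.succAbove_right_injective).sumElim
      (hK.injective_right.comp Fin.succAbove_right_injective) fun _ _ => hK.left_ne_right _ _
  refine ⟨⟨⟨r, fun {z₁ z₂} h => ?_⟩, hr⟩, ?_, ?_⟩
  · rcases z₁ with i | i <;> rcases z₂ with j | j
    · simp [K33] at h
    · exact hadj i j
    · exact (hadj j i).symm
    · simp [K33] at h
  · rintro ⟨i | j, h⟩
    · exact Fin.succAbove_ne t i (hK.injective_left h)
    · exact hK.left_ne_right t _ h.symm
  · rintro ⟨i | j, h⟩
    · exact hK.left_ne_right _ q h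
    · exact Fin.succAbove_ne q j (hK.injective_right h)

lemma IsK44MinusIn.exists_isGraphCircle_hasGraphMinor_K33_of_ne_zero (hK : IsK44MinusIn G f g)
    {a b : Fin 4} (ha : a ≠ 0) (hab : G.Adj (f a) (f b)) :
    ∃ X, IsGraphCircle G X ∧ HasGraphMinor (contractGraph G X) K33 := by
  obtain ⟨q, hbq, hbq'⟩ : ∃ q : Fin 4, (b = 0 ∨ q = 0) ∧ (b ≠ 0 ∨ q ≠ 0) := by
    by_cases hb : b = 0
    exacts [⟨1, Or.inl hb, Or.inr one_ne_zero⟩, ⟨0, Or.inr rfl, Or.inl hb⟩]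
  obtain ⟨r, hb, hq⟩ := hK.exists_K33_copy_avoiding hbq
  exact exists_isGraphCircle_hasGraphMinor_contractGraph r hab (hK.adj b q hbq')
    (hK.adj a q (Or.inl ha)).symm hb hq

lemma IsK44MinusIn.exists_isGraphCircle_hasGraphMinor_K33 (hK : IsK44MinusIn G f g)
    {a b : Fin 4} (hab : G.Adj (f a) (f b)) :
    ∃ X, IsGraphCircle G X ∧ HasGraphMinor (contractGraph G X) K33 := by
  by_cases ha : a = 0
  · have hb : b ≠ 0 := fun hb => hab.ne (by rw [ha, hb])
    exact hK.exists_isGraphCircle_hasGraphMinor_K33_of_ne_zero hb hab.symm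
  · exact hK.exists_isGraphCircle_hasGraphMinor_K33_of_ne_zero ha hab

lemma isK44MinusIn_inl_inr {G : SimpleGraph (Fin 4 ⊕ Fin 4)} (hG : K44minus ≤ G) :
    IsK44MinusIn G Sum.inl Sum.inr where
  injective_left := Sum.inl_injective
  injective_right := Sum.inr_injective
  left_ne_right _ _ := Sum.inl_ne_inr
  adj i j hij := hG <| by
    simp only [K44minus, K44, deleteEdges_adj, completeBipartiteGraph_adj]
    aesop

lemma IsK44MinusIn.swap (hK : IsK44MinusIn G f g) : IsK44MinusIn G g f where
  injective_left := hK.injective_right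
  injective_right := hK.injective_left
  left_ne_right i j := (hK.left_ne_right j i).symm
  adj i j hij := (hK.adj j i hij.symm).symm

end CompleteBipartite

lemma K44minus_le_of_eq {G : SimpleGraph (Fin 4 ⊕ Fin 4)} (hG : G = K44minus ∨ G = K44) :
    K44minus ≤ G := by
  rcases hG with rfl | rfl
  exacts [le_rfl, deleteEdges_le _]

theorem statement_13_general (G : SimpleGraph (Fin 4 ⊕ Fin 4)) (hG : G = K44minus ∨ G = K44)
    (u v : Fin 4 ⊕ Fin 4) (huv : u ≠ v)
    (hside : (u ∈ Set.range (Sum.inl : Fin 4 → Fin 4 ⊕ Fin 4) ∧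
              v ∈ Set.range (Sum.inl : Fin 4 → Fin 4 ⊕ Fin 4)) ∨
             (u ∈ Set.range (Sum.inr : Fin 4 → Fin 4 ⊕ Fin 4) ∧
              v ∈ Set.range (Sum.inr : Fin 4 → Fin 4 ⊕ Fin 4))) :
    ∃ X : Set (Sym2 (Fin 4 ⊕ Fin 4)),
      IsGraphCircle (G ⊔ SimpleGraph.fromEdgeSet {s(u, v)}) X ∧
      HasGraphMinor (contractGraph (G ⊔ SimpleGraph.fromEdgeSet {s(u, v)}) X) K33 := by
  have hK : IsK44MinusIn (G ⊔ fromEdgeSet {s(u, v)}) Sum.inl Sum.inr :=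
    isK44MinusIn_inl_inr ((K44minus_le_of_eq hG).trans le_sup_left)
  have he : (G ⊔ fromEdgeSet {s(u, v)}).Adj u v := Or.inr ⟨rfl, huv⟩
  rcases hside with ⟨⟨a, rfl⟩, ⟨b, rfl⟩⟩ | ⟨⟨a, rfl⟩, ⟨b, rfl⟩⟩
  · exact hK.exists_isGraphCircle_hasGraphMinor_K33 he
  · exact hK.swap.exists_isGraphCircle_hasGraphMinor_K33 he

/-- Let `G` be `K₄,₄⁻` or `K₄,₄`, and let `G_e` be obtained from `G` by
adding an edge between two non-adjacent vertices lying in the same side of the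
bipartition. Then some circle `X` of `G_e` satisfies: `G_e/X` has a `K₃,₃`-minor. -/
theorem statement_13 (G : SimpleGraph (Fin 4 ⊕ Fin 4)) (hG : G = K44minus ∨ G = K44)
    (u v : Fin 4 ⊕ Fin 4) (huv : u ≠ v)
    (hside : (u ∈ Set.range (Sum.inl : Fin 4 → Fin 4 ⊕ Fin 4) ∧
              v ∈ Set.range (Sum.inl : Fin 4 → Fin 4 ⊕ Fin 4)) ∨
             (u ∈ Set.range (Sum.inr : Fin 4 → Fin 4 ⊕ Fin 4) ∧
              v ∈ Set.range (Sum.inr : Fin 4 → Fin 4 ⊕ Fin 4)))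
    (hadj : ¬ G.Adj u v) :
    ∃ X : Set (Sym2 (Fin 4 ⊕ Fin 4)),
      IsGraphCircle (G ⊔ SimpleGraph.fromEdgeSet {s(u, v)}) X ∧
      HasGraphMinor (contractGraph (G ⊔ SimpleGraph.fromEdgeSet {s(u, v)}) X) K33 :=
  statement_13_general G hG u v huv hside
end
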